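/- Let d, w₁, w₂, w₃ be odd positive integers, χ : ℤ → ℂ be d-periodic, and ξ ∈ ℂ with the relevant ξ^{d w_i w_j} + 1 ≠ 0. Then for all n ≥ 0 and y₁,y₂ ∈ ℂ: ∑_{k+l+m=n} (n!/(k!l!m!)) E_{k,χ,ξ^{w₂w₃}}(w₁y₁) E_{l,χ,ξ^{w₁w₃}}(w₂y₂) T_m(w₃d−1; χ, ξ^{w₁w₂}) w₁^{l+m} w₂^{k+m} w₃^{k+l} equals the analogous expression for every one of the six permutations of (w₁, w₂, w₃). -/

import Mathlib

/-! Write `F_m = ∑_{j<d} (-1)^j χ(j) ξ^{mj} e^{mjt}` and `A_m = ξ^{dm} e^{dmt} + 1`. After the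
substitution `t ↦ w_i w_j t`, the generating function of `E_{·,χ,ξ^{w_i w_j}}(x)` is
`2 e^{w_i w_j x t} F_{w_i w_j} / A_{w_i w_j}`, while that of `T_·(w₃d - 1; χ, ξ^{w₁w₂})` at
`w₁w₂t` is `∑_{a<w₃d} (-1)^a χ(a) ξ^{w₁w₂a} e^{w₁w₂at}`. Splitting `a = qd + j` and using the
`d`-periodicity of `χ`, this is `F_{w₁w₂}` times a geometric sum in `-ξ^{dw₁w₂} e^{dw₁w₂t}`, which,
`d` and `w₃` being odd, equals `F_{w₁w₂} A_{w₁w₂w₃} / A_{w₁w₂}`. Hence the triple sum is `n!` times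
the `tⁿ`-coefficient of `4 e^{w₁w₂w₃(y₁+y₂)t} A_{w₁w₂w₃} ∏_{i<j} F_{w_iw_j} / A_{w_iw_j}`, which
is symmetric in `w₁, w₂, w₃`. -/

open Finset PowerSeries

/-- Generating function of the generalized twisted Euler polynomials:
`2 e^{xt} (ξ^d e^{dt}+1)⁻¹ ∑_{a=0}^{d-1} (-1)^a χ(a) ξ^a e^{at}` in `ℂ[[t]]`. -/
noncomputable def Egf (d : ℕ) (χ : ℤ → ℂ) (ξ x : ℂ) : PowerSeries ℂ :=
  2 * rescale x (exp ℂ) * (ξ ^ d • rescale (d : ℂ) (exp ℂ) + 1)⁻¹ *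
    ∑ a ∈ Finset.range d, ((-1 : ℂ) ^ a * χ a * ξ ^ a) • rescale (a : ℂ) (exp ℂ)

/-- The generalized twisted Euler polynomial `E_{n,χ,ξ}(x)`. -/
noncomputable def E (d : ℕ) (χ : ℤ → ℂ) (ξ x : ℂ) (n : ℕ) : ℂ :=
  (n.factorial : ℂ) * PowerSeries.coeff n (Egf d χ ξ x)

/-- The alternating generalized twisted power sum `T_k(m; χ, ξ)`. -/
noncomputable def T (m : ℕ) (χ : ℤ → ℂ) (ξ : ℂ) (k : ℕ) : ℂ :=
  ∑ a ∈ Finset.range (m + 1), (-1 : ℂ) ^ a * χ a * ξ ^ a * (a : ℂ) ^ k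


/-- The triple sum of Theorem 2, as a function of `(w₁, w₂, w₃)`. -/
noncomputable def S (d : ℕ) (χ : ℤ → ℂ) (ξ : ℂ) (n : ℕ) (y₁ y₂ : ℂ)
    (u v w : ℕ) : ℂ :=
  ∑ k ∈ Finset.range (n + 1), ∑ l ∈ Finset.range (n + 1 - k),
    (n.factorial : ℂ) / ((k.factorial : ℂ) * (l.factorial : ℂ) * ((n - k - l).factorial : ℂ)) *
      E d χ (ξ ^ (v * w)) ((u : ℂ) * y₁) k *
      E d χ (ξ ^ (u * w)) ((v : ℂ) * y₂) l *
      T (w * d - 1) χ (ξ ^ (u * v)) (n - k - l) *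
      (u : ℂ) ^ (l + (n - k - l)) * (v : ℂ) ^ (k + (n - k - l)) * (w : ℂ) ^ (k + l)

namespace PowerSeries

variable {R : Type*} [CommSemiring R]

theorem constantCoeff_rescale (c : R) (φ : R⟦X⟧) :
    constantCoeff (rescale c φ) = constantCoeff φ := by
  rw [← coeff_zero_eq_constantCoeff_apply, coeff_rescale, pow_zero, one_mul,
    coeff_zero_eq_constantCoeff_apply]

theorem rescale_smul (c r : R) (φ : R⟦X⟧) : rescale c (r • φ) = r • rescale c φ := by
  ext n
  simp only [coeff_rescale, coeff_smul, smul_eq_mul]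
  ring

theorem coeff_mul_mul_eq_sum_range (φ ψ θ : R⟦X⟧) (n : ℕ) :
    coeff n (φ * ψ * θ) = ∑ k ∈ range (n + 1), ∑ l ∈ range (n + 1 - k),
      coeff k φ * coeff l ψ * coeff (n - k - l) θ := by
  rw [mul_assoc, coeff_mul, Nat.sum_antidiagonal_eq_sum_range_succ_mk]
  refine sum_congr rfl fun k hk => ?_
  rw [coeff_mul, Nat.sum_antidiagonal_eq_sum_range_succ_mk, mul_sum,
    show n + 1 - k = n - k + 1 by have := mem_range.mp hk; omega]
  simp only [mul_assoc, Nat.sub_sub]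

theorem rescale_inv {k : Type*} [Field k] (c : k) (φ : k⟦X⟧) :
    rescale c φ⁻¹ = (rescale c φ)⁻¹ := by
  by_cases h : constantCoeff φ = 0
  · rw [inv_eq_zero.mpr h, inv_eq_zero.mpr (by rwa [constantCoeff_rescale]), map_zero]
  · rw [eq_inv_iff_mul_eq_one (by rwa [constantCoeff_rescale]), ← map_mul,
      PowerSeries.inv_mul_cancel _ h, map_one]

theorem rescale_exp_pow {A : Type*} [CommRing A] [Algebra ℚ A] (a : A) (k : ℕ) :
    rescale a (exp A) ^ k = rescale (k * a) (exp A) := by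
  rw [← map_pow, exp_pow_eq_rescale_exp, rescale_rescale]

end PowerSeries

theorem mul_geom_sum_neg_of_odd {R : Type*} [CommRing R] (x : R) {q : ℕ} (hq : Odd q) :
    (x + 1) * ∑ i ∈ range q, (-x) ^ i = x ^ q + 1 := by
  have h := geom_sum_mul (-x) q
  rw [hq.neg_pow] at h
  linear_combination -h

theorem apply_perm_fin_three_eq_of_swap_invariant {α β : Type*} (f : α → α → α → β)
    (h01 : ∀ a b c, f b a c = f a b c) (h12 : ∀ a b c, f a c b = f a b c)
    (w : Fin 3 → α) (σ : Equiv.Perm (Fin 3)) :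
    f (w (σ 0)) (w (σ 1)) (w (σ 2)) = f (w 0) (w 1) (w 2) := by
  have hσ : σ = 1 ∨ σ = Equiv.swap 0 1 ∨ σ = Equiv.swap 1 2 ∨ σ = Equiv.swap 0 2 ∨
      σ = Equiv.swap 0 1 * Equiv.swap 1 2 ∨ σ = Equiv.swap 1 2 * Equiv.swap 0 1 := by
    revert σ; decide
  rcases hσ with rfl | rfl | rfl | rfl | rfl | rfl <;>
    simp [Equiv.swap_apply_of_ne_of_ne, h01, h12]

noncomputable def twistedExpSum (N : ℕ) (χ : ℤ → ℂ) (ξ : ℂ) (m : ℕ) : ℂ⟦X⟧ :=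
  ∑ a ∈ range N, ((-1 : ℂ) ^ a * χ a * ξ ^ (m * a)) • rescale ((m * a : ℕ) : ℂ) (exp ℂ)

noncomputable def eulerDenom (d : ℕ) (ξ : ℂ) (m : ℕ) : ℂ⟦X⟧ :=
  ξ ^ (d * m) • rescale ((d * m : ℕ) : ℂ) (exp ℂ) + 1

theorem constantCoeff_eulerDenom (d : ℕ) (ξ : ℂ) (m : ℕ) :
    constantCoeff (eulerDenom d ξ m) = ξ ^ (d * m) + 1 := by
  simp [eulerDenom, constantCoeff_rescale]

theorem rescale_Egf (d : ℕ) (χ : ℤ → ℂ) (ξ x : ℂ) (m : ℕ) :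
    rescale (m : ℂ) (Egf d χ (ξ ^ m) x) =
      2 * rescale (m * x) (exp ℂ) * (eulerDenom d ξ m)⁻¹ * twistedExpSum d χ ξ m := by
  simp only [Egf, eulerDenom, twistedExpSum, map_mul, map_add, map_one, map_ofNat, map_sum,
    rescale_inv, rescale_smul, rescale_rescale, ← pow_mul, Nat.cast_mul, mul_comm _ (m : ℂ),
    mul_comm m d]

theorem twistedExpSum_mul_period (d : ℕ) (hd : Odd d) (χ : ℤ → ℂ)
    (hχ : Function.Periodic χ (d : ℤ)) (ξ : ℂ) (m q : ℕ) :
    twistedExpSum (q * d) χ ξ m = twistedExpSum d χ ξ m *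
      ∑ c ∈ range q, (-(ξ ^ (d * m) • rescale ((d * m : ℕ) : ℂ) (exp ℂ))) ^ c := by
  induction q with
  | zero => simp [twistedExpSum]
  | succ q ih =>
    rw [twistedExpSum, Nat.succ_mul, sum_range_add, ← twistedExpSum, ih, sum_range_succ,
      mul_add]
    congr 1
    rw [twistedExpSum, sum_mul]
    refine sum_congr rfl fun b _ => ?_
    have hχb : χ ((q * d + b : ℕ) : ℤ) = χ b := by
      push_cast
      rw [add_comm]
      exact hχ.nat_mul q b
    have hsign : (-1 : ℂ) ^ (q * d + b) = (-1) ^ q * (-1) ^ b := by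
      rw [pow_add, mul_comm q d, pow_mul, hd.neg_one_pow]
    rw [← neg_smul, smul_pow, rescale_exp_pow, smul_mul_smul_comm, exp_mul_exp_eq_exp_add, hχb,
      hsign, neg_pow (ξ ^ (d * m))]
    congr 1
    · rw [← pow_mul, show m * (q * d + b) = m * b + d * m * q by ring, pow_add]
      ring
    · congr 2; push_cast; ring

theorem eulerDenom_mul_twistedExpSum (d : ℕ) (hd : Odd d) (χ : ℤ → ℂ)
    (hχ : Function.Periodic χ (d : ℤ)) (ξ : ℂ) (m : ℕ) {q : ℕ} (hq : Odd q) :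
    eulerDenom d ξ m * twistedExpSum (q * d) χ ξ m =
      twistedExpSum d χ ξ m * eulerDenom d ξ (m * q) := by
  have hpow : (ξ ^ (d * m) • rescale ((d * m : ℕ) : ℂ) (exp ℂ)) ^ q =
      ξ ^ (d * (m * q)) • rescale ((d * (m * q) : ℕ) : ℂ) (exp ℂ) := by
    rw [smul_pow, rescale_exp_pow, ← pow_mul, ← mul_assoc]
    congr 3
    push_cast
    ring
  rw [twistedExpSum_mul_period d hd χ hχ, mul_left_comm, eulerDenom, mul_geom_sum_neg_of_odd _ hq,
    hpow, eulerDenom]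

theorem coeff_twistedExpSum {N : ℕ} (hN : 0 < N) (χ : ℤ → ℂ) (ξ : ℂ) (m M : ℕ) :
    coeff M (twistedExpSum N χ ξ m) = (m : ℂ) ^ M / M.factorial * T (N - 1) χ (ξ ^ m) M := by
  rw [twistedExpSum, T, Nat.sub_add_cancel hN, map_sum, mul_sum]
  refine sum_congr rfl fun a _ => ?_
  rw [coeff_smul, smul_eq_mul, coeff_rescale, coeff_exp, eq_ratCast]
  push_cast
  rw [← pow_mul]
  field_simp
  ring

noncomputable def symmSeries (d : ℕ) (χ : ℤ → ℂ) (ξ y₁ y₂ : ℂ) (a b c : ℕ) : ℂ⟦X⟧ :=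
  4 * rescale ((a * b * c : ℕ) * (y₁ + y₂)) (exp ℂ) * eulerDenom d ξ (a * b * c) *
    ((eulerDenom d ξ (b * c))⁻¹ * (eulerDenom d ξ (a * c))⁻¹ * (eulerDenom d ξ (a * b))⁻¹) *
    (twistedExpSum d χ ξ (b * c) * twistedExpSum d χ ξ (a * c) * twistedExpSum d χ ξ (a * b))

theorem symmSeries_swap_left (d : ℕ) (χ : ℤ → ℂ) (ξ y₁ y₂ : ℂ) (a b c : ℕ) :
    symmSeries d χ ξ y₁ y₂ b a c = symmSeries d χ ξ y₁ y₂ a b c := by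
  rw [symmSeries, symmSeries, Nat.mul_comm b a]
  ring

theorem symmSeries_swap_right (d : ℕ) (χ : ℤ → ℂ) (ξ y₁ y₂ : ℂ) (a b c : ℕ) :
    symmSeries d χ ξ y₁ y₂ a c b = symmSeries d χ ξ y₁ y₂ a b c := by
  rw [symmSeries, symmSeries, Nat.mul_right_comm a c b, Nat.mul_comm c b]
  ring

theorem rescale_Egf_mul_rescale_Egf_mul_twistedExpSum (d : ℕ) (hd : Odd d) (χ : ℤ → ℂ)
    (hχ : Function.Periodic χ (d : ℤ)) (ξ y₁ y₂ : ℂ) (a b : ℕ) {c : ℕ} (hc : Odd c)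
    (hab : ξ ^ (d * a * b) + 1 ≠ 0) :
    rescale ((b * c : ℕ) : ℂ) (Egf d χ (ξ ^ (b * c)) (a * y₁)) *
      rescale ((a * c : ℕ) : ℂ) (Egf d χ (ξ ^ (a * c)) (b * y₂)) *
      twistedExpSum (c * d) χ ξ (a * b) = symmSeries d χ ξ y₁ y₂ a b c := by
  have hunit : (eulerDenom d ξ (a * b))⁻¹ * eulerDenom d ξ (a * b) = 1 :=
    PowerSeries.inv_mul_cancel _ (by rwa [constantCoeff_eulerDenom, ← mul_assoc])
  have hsum : twistedExpSum (c * d) χ ξ (a * b) =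
      (eulerDenom d ξ (a * b))⁻¹ * (twistedExpSum d χ ξ (a * b) * eulerDenom d ξ (a * b * c)) := by
    rw [← eulerDenom_mul_twistedExpSum d hd χ hχ ξ (a * b) hc, ← mul_assoc, hunit, one_mul]
  have hexp : rescale ((b * c : ℕ) * (a * y₁)) (exp ℂ) * rescale ((a * c : ℕ) * (b * y₂)) (exp ℂ)
      = rescale ((a * b * c : ℕ) * (y₁ + y₂)) (exp ℂ) := by
    rw [exp_mul_exp_eq_exp_add]
    congr 2
    push_cast
    ring
  rw [rescale_Egf, rescale_Egf, hsum, symmSeries, ← hexp]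
  ring

theorem S_eq_coeff_symmSeries (d : ℕ) (hd : Odd d) (χ : ℤ → ℂ)
    (hχ : Function.Periodic χ (d : ℤ)) (ξ : ℂ) (n : ℕ) (y₁ y₂ : ℂ) (a b : ℕ) {c : ℕ}
    (hc : Odd c) (hab : ξ ^ (d * a * b) + 1 ≠ 0) :
    S d χ ξ n y₁ y₂ a b c = n.factorial * coeff n (symmSeries d χ ξ y₁ y₂ a b c) := by
  rw [← rescale_Egf_mul_rescale_Egf_mul_twistedExpSum d hd χ hχ ξ y₁ y₂ a b hc hab,
    coeff_mul_mul_eq_sum_range, mul_sum, S]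
  refine sum_congr rfl fun k _ => ?_
  rw [mul_sum]
  refine sum_congr rfl fun l _ => ?_
  rw [coeff_rescale, coeff_rescale, coeff_twistedExpSum (Nat.mul_pos hc.pos hd.pos), E, E]
  push_cast
  field_simp [Nat.factorial_ne_zero]
  ring

theorem theorem2_general (d : ℕ) (hd : Odd d)
    (χ : ℤ → ℂ) (hχ : Function.Periodic χ (d : ℤ)) (ξ : ℂ)
    (w : Fin 3 → ℕ) (hwodd : ∀ i, Odd (w i))
    (hξ : ∀ i j, i ≠ j → ξ ^ (d * w i * w j) + 1 ≠ 0)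
    (n : ℕ) (y₁ y₂ : ℂ) (σ : Equiv.Perm (Fin 3)) :
    S d χ ξ n y₁ y₂ (w (σ 0)) (w (σ 1)) (w (σ 2)) =
      S d χ ξ n y₁ y₂ (w 0) (w 1) (w 2) := by
  have hS : ∀ {i j : Fin 3} (k : Fin 3), i ≠ j → S d χ ξ n y₁ y₂ (w i) (w j) (w k) =
      n.factorial * coeff n (symmSeries d χ ξ y₁ y₂ (w i) (w j) (w k)) := fun k hij =>
    S_eq_coeff_symmSeries d hd χ hχ ξ n y₁ y₂ _ _ (hwodd k) (hξ _ _ hij)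
  rw [hS _ (σ.injective.ne (by decide)), hS _ (by decide),
    apply_perm_fin_three_eq_of_swap_invariant (symmSeries d χ ξ y₁ y₂)
      (symmSeries_swap_left d χ ξ y₁ y₂) (symmSeries_swap_right d χ ξ y₁ y₂)]

/-- Theorem 2: the expression is invariant under all six permutations of `(w₁,w₂,w₃)`. -/
theorem theorem2 (d : ℕ) (hd : Odd d) (hd0 : 0 < d)
    (χ : ℤ → ℂ) (hχ : Function.Periodic χ (d : ℤ)) (ξ : ℂ)
    (w : Fin 3 → ℕ) (hw : ∀ i, 0 < w i) (hwodd : ∀ i, Odd (w i))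
    (hξ : ∀ i j, i ≠ j → ξ ^ (d * w i * w j) + 1 ≠ 0)
    (n : ℕ) (y₁ y₂ : ℂ) (σ : Equiv.Perm (Fin 3)) :
    S d χ ξ n y₁ y₂ (w (σ 0)) (w (σ 1)) (w (σ 2)) =
      S d χ ξ n y₁ y₂ (w 0) (w 1) (w 2) :=
  theorem2_general d hd χ hχ ξ w hwodd hξ n y₁ y₂ σ
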